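/- Let a, b, c, d ∈ ℍ be such that (a,c) and (b,d) are quaternionic spinors and a*d − c*b = 1. Then all eight products ab*, cd*, c*a, d*b, ba*, dc*, a*c, b*d are paravectors, and ad* − bc* = da* − cb* = d*a − b*c = 1. In particular, (a*,b*) and (c*,d*) are also quaternionic spinors. -/

import Mathlib

/-!
The map `q ↦ q*` is an involutive anti-automorphism of `ℍ` whose fixed points are the
paravectors, and the spinor condition on `(ξ, η)` is equivalent to `ξ* η` being a paravector,
i.e. to `ξ* η = η* ξ`. Hence the hypotheses say precisely that
`!![d*, -b*; -c*, a*]` is a left inverse of `!![a, b; c, d]`. Matrices over a division ring are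
Dedekind-finite, so it is also a right inverse; the entries of that product give the remaining
identities, and each paravector claim is one of them rewritten as `(x y*)* = x y*`.
-/

open Quaternion

noncomputable section

/-- The involution `q* = a + bi + cj - dk` on quaternions (Clifford reversion). -/
def qstar (q : ℍ[ℝ]) : ℍ[ℝ] := ⟨q.re, q.imI, q.imJ, -q.imK⟩

/-- The involution `q' = a - bi - cj + dk` on quaternions. -/
def qprime (q : ℍ[ℝ]) : ℍ[ℝ] := ⟨q.re, -q.imI, -q.imJ, q.imK⟩

/-- A paravector is an element of `ℝ + ℝi + ℝj`, i.e. a quaternion with zero `k`-component. -/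
def IsParavector (q : ℍ[ℝ]) : Prop := q.imK = 0

/-- The quaternion `k`. -/
def qk : ℍ[ℝ] := ⟨0, 0, 0, 1⟩

/-- A quaternionic spinor: a pair `(ξ, η) ≠ (0,0)` with `ξ * conj η` a paravector. -/
def IsSpinor (κ : ℍ[ℝ] × ℍ[ℝ]) : Prop := κ ≠ 0 ∧ IsParavector (κ.1 * star κ.2)

/-- The bracket `{κ₁, κ₂} = ξ₁* η₂ − η₁* ξ₂`. -/
def bracket (κ₁ κ₂ : ℍ[ℝ] × ℍ[ℝ]) : ℍ[ℝ] := qstar κ₁.1 * κ₂.2 - qstar κ₁.2 * κ₂.1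

/-- Right multiplication `κ x = (ξ x, η x)`. -/
def rmul (κ : ℍ[ℝ] × ℍ[ℝ]) (x : ℍ[ℝ]) : ℍ[ℝ] × ℍ[ℝ] := (κ.1 * x, κ.2 * x)

/-- The complementary pair `κ̌ = (η', −ξ')`. -/
def qcheck (κ : ℍ[ℝ] × ℍ[ℝ]) : ℍ[ℝ] × ℍ[ℝ] := (qprime κ.2, -qprime κ.1)

/-- The real inner product on `ℍ²`: `⟨κ₁, κ₂⟩ = Re (ξ₁ ξ̄₂ + η₁ η̄₂)`. -/
def qinner (κ₁ κ₂ : ℍ[ℝ] × ℍ[ℝ]) : ℝ := (κ₁.1 * star κ₂.1 + κ₁.2 * star κ₂.2).re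

/-- The squared norm `|κ|² = |ξ|² + |η|²` on `ℍ²`. -/
def qnsq (κ : ℍ[ℝ] × ℍ[ℝ]) : ℝ := Quaternion.normSq κ.1 + Quaternion.normSq κ.2

namespace Matrix

theorem fin_two_mul_eq_one_comm {R : Type*} [Ring R] [IsStablyFiniteRing R]
    {a b c d a' b' c' d' : R}
    (h₁₁ : d' * a - b' * c = 1) (h₁₂ : d' * b - b' * d = 0)
    (h₂₁ : a' * c - c' * a = 0) (h₂₂ : a' * d - c' * b = 1) :
    a * d' - b * c' = 1 ∧ b * a' - a * b' = 0 ∧ c * d' - d * c' = 0 ∧ d * a' - c * b' = 1 := by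
  have hleft : !![d', -b'; -c', a'] * !![a, b; c, d] = 1 := by
    simp only [mul_fin_two, one_fin_two, neg_mul, ← sub_eq_neg_add, ← sub_eq_add_neg,
      h₁₁, h₁₂, h₂₁, h₂₂]
  have hright := mul_eq_one_comm.mp hleft
  simp only [mul_fin_two, one_fin_two, mul_neg, ← sub_eq_add_neg, ← sub_eq_neg_add] at hright
  exact ⟨congrFun₂ hright 0 0, congrFun₂ hright 0 1, congrFun₂ hright 1 0, congrFun₂ hright 1 1⟩

end Matrix

@[simp] theorem re_qstar (q : ℍ[ℝ]) : (qstar q).re = q.re := rfl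
@[simp] theorem imI_qstar (q : ℍ[ℝ]) : (qstar q).imI = q.imI := rfl
@[simp] theorem imJ_qstar (q : ℍ[ℝ]) : (qstar q).imJ = q.imJ := rfl
@[simp] theorem imK_qstar (q : ℍ[ℝ]) : (qstar q).imK = -q.imK := rfl

@[simp]
theorem qstar_mul (p q : ℍ[ℝ]) : qstar (p * q) = qstar q * qstar p := by
  ext <;> simp <;> ring

@[simp]
theorem qstar_sub (p q : ℍ[ℝ]) : qstar (p - q) = qstar p - qstar q := by
  ext <;> simp [neg_add_eq_sub]

@[simp]
theorem qstar_zero : qstar (0 : ℍ[ℝ]) = 0 := by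
  ext <;> simp

@[simp]
theorem qstar_one : qstar (1 : ℍ[ℝ]) = 1 := by
  ext <;> simp

@[simp]
theorem qstar_qstar (q : ℍ[ℝ]) : qstar (qstar q) = q := by
  ext <;> simp

@[simp]
theorem qstar_eq_zero_iff {q : ℍ[ℝ]} : qstar q = 0 ↔ q = 0 :=
  Function.Involutive.eq_iff qstar_qstar |>.trans (by rw [qstar_zero])

theorem isParavector_iff_qstar_eq {q : ℍ[ℝ]} : IsParavector q ↔ qstar q = q := by
  rw [IsParavector]
  constructor
  · intro h
    ext <;> simp [h]
  · intro h
    have hk : -q.imK = q.imK := congrArg QuaternionAlgebra.imK h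
    linarith

theorem isParavector_mul_qstar_iff {p q : ℍ[ℝ]} :
    IsParavector (p * qstar q) ↔ q * qstar p = p * qstar q := by
  rw [isParavector_iff_qstar_eq, qstar_mul, qstar_qstar]

theorem isParavector_qstar_mul_iff {p q : ℍ[ℝ]} :
    IsParavector (qstar p * q) ↔ qstar q * p = qstar p * q := by
  rw [isParavector_iff_qstar_eq, qstar_mul, qstar_qstar]

theorem isParavector_mul_star_iff {p q : ℍ[ℝ]} :
    IsParavector (p * star q) ↔ IsParavector (qstar p * q) := by
  simp only [IsParavector, Quaternion.imK_mul, Quaternion.re_star, Quaternion.imI_star,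
    Quaternion.imJ_star, Quaternion.imK_star, re_qstar, imI_qstar, imJ_qstar, imK_qstar]
  constructor <;> intro h <;> linarith

theorem isSpinor_qstar {p q : ℍ[ℝ]} (hpq : (p, q) ≠ 0) (h : IsParavector (p * qstar q)) :
    IsSpinor (qstar p, qstar q) := by
  refine ⟨?_, ?_⟩
  · simpa [Prod.ext_iff] using hpq
  · rwa [isParavector_mul_star_iff, qstar_qstar]

theorem IsSpinor.qstar_mul_comm {ξ η : ℍ[ℝ]} (h : IsSpinor (ξ, η)) :
    qstar η * ξ = qstar ξ * η :=
  isParavector_qstar_mul_iff.mp (isParavector_mul_star_iff.mp h.2)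

/-- If `(a,c)` and `(b,d)` are quaternionic spinors with `a*d − c*b = 1`, then all eight
products `ab*, cd*, c*a, d*b, ba*, dc*, a*c, b*d` are paravectors,
`ad* − bc* = da* − cb* = d*a − b*c = 1`, and `(a*,b*)` and `(c*,d*)` are spinors. -/
theorem clifford_matrix_conditions (a b c d : ℍ[ℝ])
    (h1 : IsSpinor (a, c)) (h2 : IsSpinor (b, d))
    (h3 : qstar a * d - qstar c * b = 1) :
    (IsParavector (a * qstar b) ∧ IsParavector (c * qstar d) ∧
     IsParavector (qstar c * a) ∧ IsParavector (qstar d * b) ∧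
     IsParavector (b * qstar a) ∧ IsParavector (d * qstar c) ∧
     IsParavector (qstar a * c) ∧ IsParavector (qstar b * d)) ∧
    (a * qstar d - b * qstar c = 1 ∧ d * qstar a - c * qstar b = 1 ∧
     qstar d * a - qstar b * c = 1) ∧
    (IsSpinor (qstar a, qstar b) ∧ IsSpinor (qstar c, qstar d)) := by
  have hca := h1.qstar_mul_comm
  have hdb := h2.qstar_mul_comm
  have h3' : qstar d * a - qstar b * c = 1 := by simpa using congrArg qstar h3
  obtain ⟨had, hba, hcd, hda⟩ := Matrix.fin_two_mul_eq_one_comm h3'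
    (sub_eq_zero.mpr hdb) (sub_eq_zero.mpr hca.symm) h3
  have hab : a * qstar b = b * qstar a := (sub_eq_zero.mp hba).symm
  have hdc : d * qstar c = c * qstar d := (sub_eq_zero.mp hcd).symm
  have hpab : IsParavector (a * qstar b) := isParavector_mul_qstar_iff.mpr hab.symm
  have hpcd : IsParavector (c * qstar d) := isParavector_mul_qstar_iff.mpr hdc
  have hab0 : (a, b) ≠ 0 := by
    rintro h
    simp_all [Prod.ext_iff]
  have hcd0 : (c, d) ≠ 0 := by
    rintro h
    simp_all [Prod.ext_iff]
  exact ⟨⟨hpab, hpcd, isParavector_qstar_mul_iff.mpr hca.symm,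
      isParavector_qstar_mul_iff.mpr hdb.symm, isParavector_mul_qstar_iff.mpr hab,
      isParavector_mul_qstar_iff.mpr hdc.symm, isParavector_qstar_mul_iff.mpr hca,
      isParavector_qstar_mul_iff.mpr hdb⟩,
    ⟨had, hda, h3'⟩, isSpinor_qstar hab0 hpab, isSpinor_qstar hcd0 hpcd⟩
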